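/- arXiv:1407.7483 — 6 statements merged into one kernel-verified Lean document; each statement's English description precedes it below -/
import Mathlib

section
/- Let S be an ordered semigroup, X a subset of S, and Q := (X ∪ ((XS] ∩ (SX])]. Then (QS] ⊆ (XS] and (SQ] ⊆ (SX]. -/
open Pointwise

/-- The "downward closure" `(A] = {t | t ≤ a for some a ∈ A}`. -/
def dcl {S : Type*} [LE S] (A : Set S) : Set S := {t | ∃ a ∈ A, t ≤ a}

/-
`T := (XS]` is a lower set with `TS ⊆ T`, and `Q ⊆ (X ∪ T]`. Since multiplication is
monotone, `(A]S ⊆ (AS]`, so `QS ⊆ ((X ∪ T)S] = (XS ∪ TS] ⊆ T`, and taking lower closures gives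
`(QS] ⊆ T`. The statement for `(SQ]` is the mirror image.
-/

open Set

section Preorder

variable {S : Type*} [Preorder S]

theorem isLowerSet_dcl (A : Set S) : IsLowerSet (dcl A) :=
  (lowerClosure A).lower

theorem subset_dcl {A : Set S} : A ⊆ dcl A :=
  subset_lowerClosure

theorem dcl_subset {A T : Set S} (hAT : A ⊆ T) (hT : IsLowerSet T) : dcl A ⊆ T :=
  lowerClosure_min hAT hT

theorem dcl_mono {A B : Set S} (hAB : A ⊆ B) : dcl A ⊆ dcl B :=
  dcl_subset (hAB.trans subset_dcl) (isLowerSet_dcl B)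

end Preorder

section OrderedSemigroup

variable {S : Type*} [Semigroup S] [Preorder S]

theorem dcl_mul_subset [MulRightMono S] (A B : Set S) : dcl A * B ⊆ dcl (A * B) := by
  rintro _ ⟨t, ⟨a, ha, hta⟩, b, hb, rfl⟩
  exact ⟨a * b, mul_mem_mul ha hb, mul_le_mul_left hta b⟩

theorem mul_dcl_subset [MulLeftMono S] (A B : Set S) : A * dcl B ⊆ dcl (A * B) := by
  rintro _ ⟨a, ha, t, ⟨b, hb, htb⟩, rfl⟩
  exact ⟨a * b, mul_mem_mul ha hb, mul_le_mul_right htb a⟩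

theorem dcl_mul_univ_mul_univ_subset [MulRightMono S] (X : Set S) :
    dcl (X * univ) * univ ⊆ dcl (X * univ) :=
  (dcl_mul_subset _ _).trans <| dcl_mono <| by
    rw [mul_assoc]
    exact mul_subset_mul_left (subset_univ _)

theorem univ_mul_univ_mul_dcl_subset [MulLeftMono S] (X : Set S) :
    univ * dcl (univ * X) ⊆ dcl (univ * X) :=
  (mul_dcl_subset _ _).trans <| dcl_mono <| by
    rw [← mul_assoc]
    exact mul_subset_mul_right (subset_univ _)

theorem dcl_mul_univ_subset_of_subset [MulRightMono S] {X A : Set S}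
    (hA : A ⊆ dcl (X ∪ dcl (X * univ))) : dcl (A * univ) ⊆ dcl (X * univ) := by
  refine dcl_subset ?_ (isLowerSet_dcl _)
  calc (A * univ : Set S) ⊆ dcl (X ∪ dcl (X * univ)) * univ := mul_subset_mul_right hA
    _ ⊆ dcl ((X ∪ dcl (X * univ)) * univ) := dcl_mul_subset _ _
    _ ⊆ dcl (X * univ) := by
      refine dcl_subset ?_ (isLowerSet_dcl _)
      rw [union_mul]
      exact union_subset subset_dcl (dcl_mul_univ_mul_univ_subset X)

theorem dcl_univ_mul_subset_of_subset [MulLeftMono S] {X A : Set S}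
    (hA : A ⊆ dcl (X ∪ dcl (univ * X))) : dcl (univ * A) ⊆ dcl (univ * X) := by
  refine dcl_subset ?_ (isLowerSet_dcl _)
  calc (univ * A : Set S) ⊆ univ * dcl (X ∪ dcl (univ * X)) := mul_subset_mul_left hA
    _ ⊆ dcl (univ * (X ∪ dcl (univ * X))) := mul_dcl_subset _ _
    _ ⊆ dcl (univ * X) := by
      refine dcl_subset ?_ (isLowerSet_dcl _)
      rw [mul_union]
      exact union_subset subset_dcl (univ_mul_univ_mul_dcl_subset X)

end OrderedSemigroup

/-- For `Q = (X ∪ ((XS] ∩ (SX])]`, we have `(QS] ⊆ (XS]` and `(SQ] ⊆ (SX]`. -/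
theorem Q_prod_subsets {S : Type*} [Semigroup S] [PartialOrder S]
    [CovariantClass S S (· * ·) (· ≤ ·)]
    [CovariantClass S S (Function.swap (· * ·)) (· ≤ ·)]
    (X : Set S) (Q : Set S)
    (hQ : Q = dcl (X ∪ (dcl (X * Set.univ) ∩ dcl (Set.univ * X)))) :
    dcl (Q * Set.univ) ⊆ dcl (X * Set.univ) ∧
    dcl (Set.univ * Q) ⊆ dcl (Set.univ * X) := by
  subst hQ
  exact ⟨dcl_mul_univ_subset_of_subset (dcl_mono (union_subset_union_right X inter_subset_left)),
    dcl_univ_mul_subset_of_subset (dcl_mono (union_subset_union_right X inter_subset_right))⟩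
end

section
/- Let S be an intra-regular ordered semigroup. Then for every right ideal X, every left ideal Y, and every bi-ideal B of S, one has X ∩ B ∩ Y ⊆ (YBX]. -/
/-! Substituting `a ≤ x a² y` into itself gives `a ≤ (x x a) (a y x a) (a y y)`: the first
factor lies in every left ideal containing `a`, the middle one in every bi-ideal containing `a`,
and the last one in every right ideal containing `a`. -/

open Pointwise

section

variable {S : Type*} [Semigroup S]

theorem Set.mul_mem_of_mul_univ_subset {X : Set S} (hX : X * Set.univ ⊆ X) {a : S} (ha : a ∈ X)
    (s : S) : a * s ∈ X :=
  hX (Set.mul_mem_mul ha (Set.mem_univ s))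

theorem Set.mul_mem_of_univ_mul_subset {Y : Set S} (hY : Set.univ * Y ⊆ Y) {a : S} (ha : a ∈ Y)
    (s : S) : s * a ∈ Y :=
  hY (Set.mul_mem_mul (Set.mem_univ s) ha)

theorem Set.mul_mul_mem_of_mul_univ_mul_subset {B : Set S} (hB : B * Set.univ * B ⊆ B) {a b : S}
    (ha : a ∈ B) (hb : b ∈ B) (s : S) : a * s * b ∈ B :=
  hB (Set.mul_mem_mul (Set.mul_mem_mul ha (Set.mem_univ s)) hb)

theorem le_mul_mul_mul_of_le_mul_sq_mul [Preorder S] [MulLeftMono S] [MulRightMono S]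
    {a x y : S} (h : a ≤ x * (a * a) * y) :
    a ≤ x * x * a * (a * (y * x) * a) * (a * (y * y)) :=
  calc a ≤ x * (a * a) * y := h
    _ ≤ x * ((x * (a * a) * y) * (x * (a * a) * y)) * y := by gcongr
    _ = x * x * a * (a * (y * x) * a) * (a * (y * y)) := by simp only [mul_assoc]

end

theorem intra_regular_implies_bi_general {S : Type*} [Semigroup S] [PartialOrder S]
    [CovariantClass S S (· * ·) (· ≤ ·)]
    [CovariantClass S S (Function.swap (· * ·)) (· ≤ ·)]
    (hir : ∀ a : S, ∃ x y : S, a ≤ x * (a * a) * y)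
    (X Y B : Set S)
    (hXr : X * Set.univ ⊆ X)
    (hYl : Set.univ * Y ⊆ Y)
    (hBb : B * Set.univ * B ⊆ B) :
    X ∩ B ∩ Y ⊆ dcl (Y * B * X) := by
  rintro a ⟨⟨haX, haB⟩, haY⟩
  obtain ⟨x, y, h⟩ := hir a
  have hY' : x * x * a ∈ Y := Set.mul_mem_of_univ_mul_subset hYl haY _
  have hB' : a * (y * x) * a ∈ B := Set.mul_mul_mem_of_mul_univ_mul_subset hBb haB haB _
  have hX' : a * (y * y) ∈ X := Set.mul_mem_of_mul_univ_subset hXr haX _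
  exact ⟨_, Set.mul_mem_mul (Set.mul_mem_mul hY' hB') hX', le_mul_mul_mul_of_le_mul_sq_mul h⟩

/-- In an intra-regular ordered semigroup, `X ∩ B ∩ Y ⊆ (YBX]` for every
right ideal X, left ideal Y and bi-ideal B. -/
theorem intra_regular_implies_bi {S : Type*} [Semigroup S] [PartialOrder S]
    [CovariantClass S S (· * ·) (· ≤ ·)]
    [CovariantClass S S (Function.swap (· * ·)) (· ≤ ·)]
    (hir : ∀ a : S, ∃ x y : S, a ≤ x * (a * a) * y)
    (X Y B : Set S)
    (hX : X.Nonempty) (hXr : X * Set.univ ⊆ X) (hXd : dcl X ⊆ X)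
    (hY : Y.Nonempty) (hYl : Set.univ * Y ⊆ Y) (hYd : dcl Y ⊆ Y)
    (hB : B.Nonempty) (hBb : B * Set.univ * B ⊆ B) (hBd : dcl B ⊆ B) :
    X ∩ B ∩ Y ⊆ dcl (Y * B * X) :=
  intra_regular_implies_bi_general hir X Y B hXr hYl hBb
end

section
/- Let S be an ordered semigroup. The following are equivalent: (1) S is intra-regular; (2) for every right ideal X, every left ideal Y, and every bi-ideal B of S, X ∩ B ∩ Y ⊆ (YBX]; (3) for every right ideal X, every left ideal Y, and every quasi-ideal Q of S, X ∩ Q ∩ Y ⊆ (YQX]. -/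
/-!
Intra-regularity gives (1) ⇒ (2) directly: substituting `a ≤ x a² y` into both factors of `a²`
yields `a ≤ (x x a)(a y x a)(a y y)`, a product of an element of `Y`, one of `B` and one of `X`.
Every quasi-ideal is a bi-ideal, so (2) ⇒ (3). For (3) ⇒ (1) take `X = Q = (a ∪ aS]` (a right
ideal is a quasi-ideal) and `Y = (a ∪ Sa]`: then `a ≤ y q x` with `q x ≤ a w` and `y ≤ a` or
`y ≤ s a`, which exhibits the factor `a²`.
-/

open Pointwise

def IsIntraRegular (S : Type*) [Mul S] [LE S] : Prop := ∀ a : S, ∃ x y : S, a ≤ x * (a * a) * y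

def BiIdealCondition (S : Type*) [Mul S] [LE S] : Prop :=
  ∀ X Y B : Set S,
    X.Nonempty → X * Set.univ ⊆ X → dcl X ⊆ X →
    Y.Nonempty → Set.univ * Y ⊆ Y → dcl Y ⊆ Y →
    B.Nonempty → B * Set.univ * B ⊆ B → dcl B ⊆ B →
    X ∩ B ∩ Y ⊆ dcl (Y * B * X)

def QuasiIdealCondition (S : Type*) [Mul S] [LE S] : Prop :=
  ∀ X Y Q : Set S,
    X.Nonempty → X * Set.univ ⊆ X → dcl X ⊆ X →
    Y.Nonempty → Set.univ * Y ⊆ Y → dcl Y ⊆ Y →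
    Q.Nonempty → dcl (Q * Set.univ) ∩ dcl (Set.univ * Q) ⊆ Q → dcl Q ⊆ Q →
    X ∩ Q ∩ Y ⊆ dcl (Y * Q * X)

section OrderedSemigroup

variable {S : Type*} [Semigroup S] [Preorder S]

theorem mul_univ_mul_subset_of_dcl_inter_subset {Q : Set S}
    (hQ : dcl (Q * Set.univ) ∩ dcl (Set.univ * Q) ⊆ Q) : Q * Set.univ * Q ⊆ Q := by
  rintro _ ⟨_, ⟨p, hp, s, -, rfl⟩, q, hq, rfl⟩
  exact hQ ⟨⟨p * (s * q), Set.mul_mem_mul hp trivial, (mul_assoc p s q).le⟩,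
    ⟨p * s * q, Set.mul_mem_mul trivial hq, le_rfl⟩⟩

theorem BiIdealCondition.quasiIdealCondition (h : BiIdealCondition S) : QuasiIdealCondition S :=
  fun X Y Q hX₁ hX₂ hX₃ hY₁ hY₂ hY₃ hQ₁ hQ₂ hQ₃ =>
    h X Y Q hX₁ hX₂ hX₃ hY₁ hY₂ hY₃ hQ₁ (mul_univ_mul_subset_of_dcl_inter_subset hQ₂) hQ₃

theorem dcl_inter_subset_of_mul_univ_subset {X : Set S} (hXS : X * Set.univ ⊆ X)
    (hX : dcl X ⊆ X) : dcl (X * Set.univ) ∩ dcl (Set.univ * X) ⊆ X :=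
  fun _ ⟨⟨x, hx, htx⟩, _⟩ => hX ⟨x, hXS hx, htx⟩

def principalRightIdeal (a : S) : Set S := {t | t ≤ a ∨ ∃ s, t ≤ a * s}

def principalLeftIdeal (a : S) : Set S := {t | t ≤ a ∨ ∃ s, t ≤ s * a}

theorem self_mem_principalRightIdeal (a : S) : a ∈ principalRightIdeal a := Or.inl le_rfl

theorem self_mem_principalLeftIdeal (a : S) : a ∈ principalLeftIdeal a := Or.inl le_rfl

theorem dcl_principalRightIdeal_subset (a : S) :
    dcl (principalRightIdeal a) ⊆ principalRightIdeal a := by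
  rintro t ⟨u, hu | ⟨s, hu⟩, htu⟩
  exacts [Or.inl (htu.trans hu), Or.inr ⟨s, htu.trans hu⟩]

theorem dcl_principalLeftIdeal_subset (a : S) :
    dcl (principalLeftIdeal a) ⊆ principalLeftIdeal a := by
  rintro t ⟨u, hu | ⟨s, hu⟩, htu⟩
  exacts [Or.inl (htu.trans hu), Or.inr ⟨s, htu.trans hu⟩]

theorem exists_mul_le_self_mul_of_mem_principalRightIdeal [MulRightMono S] {a t : S}
    (ht : t ∈ principalRightIdeal a) (z : S) : ∃ w, t * z ≤ a * w := by
  rcases ht with ht | ⟨s, ht⟩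
  · exact ⟨z, mul_le_mul_left ht z⟩
  · exact ⟨s * z, (mul_le_mul_left ht z).trans_eq (mul_assoc a s z)⟩

theorem principalRightIdeal_mul_univ_subset [MulRightMono S] (a : S) :
    principalRightIdeal a * Set.univ ⊆ principalRightIdeal a := by
  rintro _ ⟨t, ht, z, -, rfl⟩
  exact Or.inr (exists_mul_le_self_mul_of_mem_principalRightIdeal ht z)

theorem univ_mul_principalLeftIdeal_subset [MulLeftMono S] (a : S) :
    Set.univ * principalLeftIdeal a ⊆ principalLeftIdeal a := by
  rintro _ ⟨z, -, t, ht | ⟨s, ht⟩, rfl⟩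
  · exact Or.inr ⟨z, mul_le_mul_right ht z⟩
  · exact Or.inr ⟨z * s, (mul_le_mul_right ht z).trans_eq (mul_assoc z s a).symm⟩

variable [MulLeftMono S] [MulRightMono S]

theorem mem_dcl_mul_of_le_mul_sq_mul {X Y B : Set S} (hX : X * Set.univ ⊆ X)
    (hY : Set.univ * Y ⊆ Y) (hB : B * Set.univ * B ⊆ B) {a x y : S}
    (ha : a ≤ x * (a * a) * y) (haX : a ∈ X) (haB : a ∈ B) (haY : a ∈ Y) :
    a ∈ dcl (Y * B * X) := by
  have hYa : x * (x * a) ∈ Y :=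
    hY (Set.mul_mem_mul trivial (hY (Set.mul_mem_mul trivial haY)))
  have hBa : a * (y * x) * a ∈ B := hB (Set.mul_mem_mul (Set.mul_mem_mul haB trivial) haB)
  have hXa : a * (y * y) ∈ X := hX (Set.mul_mem_mul haX trivial)
  refine ⟨_, Set.mul_mem_mul (Set.mul_mem_mul hYa hBa) hXa, ?_⟩
  calc a ≤ x * (a * a) * y := ha
    _ ≤ x * ((x * (a * a) * y) * (x * (a * a) * y)) * y := by gcongr
    _ = x * (x * a) * (a * (y * x) * a) * (a * (y * y)) := by simp only [mul_assoc]

theorem exists_le_mul_sq_mul_of_le_self_mul_self_mul {a w : S} (ha : a ≤ a * (a * w)) :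
    ∃ x y, a ≤ x * (a * a) * y :=
  ⟨a, w * w, calc
    a ≤ a * (a * w) := ha
    _ ≤ a * (a * (a * w) * w) := by gcongr
    _ = a * (a * a) * (w * w) := by simp only [mul_assoc]⟩

theorem exists_le_mul_sq_mul_of_mem_dcl {a : S}
    (ha : a ∈ dcl (principalLeftIdeal a * principalRightIdeal a * principalRightIdeal a)) :
    ∃ x y, a ≤ x * (a * a) * y := by
  obtain ⟨_, ⟨_, ⟨y, hy, q, hq, rfl⟩, x, -, rfl⟩, ha⟩ := ha
  obtain ⟨w, hw⟩ := exists_mul_le_self_mul_of_mem_principalRightIdeal hq x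
  have hay : a ≤ y * (a * w) :=
    ha.trans ((mul_assoc y q x).le.trans (mul_le_mul_right hw y))
  rcases hy with hy | ⟨s, hy⟩
  · exact exists_le_mul_sq_mul_of_le_self_mul_self_mul (hay.trans (mul_le_mul_left hy _))
  · refine ⟨s, w, hay.trans ?_⟩
    calc y * (a * w) ≤ s * a * (a * w) := mul_le_mul_left hy _
      _ = s * (a * a) * w := by simp only [mul_assoc]

theorem IsIntraRegular.biIdealCondition (h : IsIntraRegular S) : BiIdealCondition S :=
  fun _ _ _ _ hX _ _ hY _ _ hB _ a ⟨⟨haX, haB⟩, haY⟩ =>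
    let ⟨_, _, ha⟩ := h a
    mem_dcl_mul_of_le_mul_sq_mul hX hY hB ha haX haB haY

theorem QuasiIdealCondition.isIntraRegular (h : QuasiIdealCondition S) : IsIntraRegular S := by
  intro a
  have hR := self_mem_principalRightIdeal a
  have hL := self_mem_principalLeftIdeal a
  have hRS := principalRightIdeal_mul_univ_subset a
  have hRd := dcl_principalRightIdeal_subset a
  exact exists_le_mul_sq_mul_of_mem_dcl <| h _ _ _ ⟨a, hR⟩ hRS hRd
    ⟨a, hL⟩ (univ_mul_principalLeftIdeal_subset a) (dcl_principalLeftIdeal_subset a)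
    ⟨a, hR⟩ (dcl_inter_subset_of_mul_univ_subset hRS hRd) hRd ⟨⟨hR, hR⟩, hL⟩

end OrderedSemigroup

/-- Theorem 1: intra-regularity is equivalent to the bi-ideal and to the
quasi-ideal conditions. -/
theorem intra_regular_tfae {S : Type*} [Semigroup S] [PartialOrder S]
    [CovariantClass S S (· * ·) (· ≤ ·)]
    [CovariantClass S S (Function.swap (· * ·)) (· ≤ ·)] :
    ((∀ a : S, ∃ x y : S, a ≤ x * (a * a) * y) ↔
      (∀ X Y B : Set S,
        X.Nonempty → X * Set.univ ⊆ X → dcl X ⊆ X →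
        Y.Nonempty → Set.univ * Y ⊆ Y → dcl Y ⊆ Y →
        B.Nonempty → B * Set.univ * B ⊆ B → dcl B ⊆ B →
        X ∩ B ∩ Y ⊆ dcl (Y * B * X))) ∧
    ((∀ a : S, ∃ x y : S, a ≤ x * (a * a) * y) ↔
      (∀ X Y Q : Set S,
        X.Nonempty → X * Set.univ ⊆ X → dcl X ⊆ X →
        Y.Nonempty → Set.univ * Y ⊆ Y → dcl Y ⊆ Y →
        Q.Nonempty → dcl (Q * Set.univ) ∩ dcl (Set.univ * Q) ⊆ Q → dcl Q ⊆ Q →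
        X ∩ Q ∩ Y ⊆ dcl (Y * Q * X))) :=
  ⟨⟨IsIntraRegular.biIdealCondition,
      fun h => QuasiIdealCondition.isIntraRegular (BiIdealCondition.quasiIdealCondition h)⟩,
    ⟨fun h => BiIdealCondition.quasiIdealCondition (IsIntraRegular.biIdealCondition h),
      QuasiIdealCondition.isIntraRegular⟩⟩
end

section
/- Let S be an le-semigroup with greatest element e and let a ∈ S. Then q := a ∨ (ae ∧ ea) is the quasi-ideal element of S generated by a; that is, qe ∧ eq ≤ q, a ≤ q, and for every t ∈ S with te ∧ et ≤ t and a ≤ t, one has q ≤ t. -/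
/-! Since `a ≤ q ≤ a ⊔ ae` and `ae · e ≤ ae`, multiplying by `e` collapses `q` back onto `a`:
`qe = ae` and `eq = ea`. Hence `qe ∧ eq = ae ∧ ea ≤ q`, and any quasi-ideal element `t ≥ a`
satisfies `ae ∧ ea ≤ te ∧ et ≤ t`. -/

section DistribSemigroupLattice

variable {S : Type*} [Semigroup S] [Lattice S]

theorem mul_le_mul_right_of_sup_mul (hrd : ∀ a b c : S, (a ⊔ b) * c = a * c ⊔ b * c)
    {b c : S} (h : b ≤ c) (d : S) : b * d ≤ c * d := by
  have hdist := hrd b c d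
  rw [sup_eq_right.mpr h] at hdist
  exact hdist ▸ le_sup_left

theorem mul_le_mul_left_of_mul_sup (hld : ∀ a b c : S, a * (b ⊔ c) = a * b ⊔ a * c)
    {b c : S} (h : b ≤ c) (d : S) : d * b ≤ d * c := by
  have hdist := hld d b c
  rw [sup_eq_right.mpr h] at hdist
  exact hdist ▸ le_sup_left

variable {e : S} (he : ∀ a : S, a ≤ e)
  (hld : ∀ a b c : S, a * (b ⊔ c) = a * b ⊔ a * c)
  (hrd : ∀ a b c : S, (a ⊔ b) * c = a * c ⊔ b * c)
include he hld hrd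

theorem sup_inf_mul_top (a : S) : (a ⊔ (a * e ⊓ e * a)) * e = a * e := by
  refine le_antisymm ?_ (mul_le_mul_right_of_sup_mul hrd le_sup_left e)
  calc (a ⊔ (a * e ⊓ e * a)) * e ≤ (a ⊔ a * e) * e :=
        mul_le_mul_right_of_sup_mul hrd (sup_le_sup_left inf_le_left a) e
    _ = a * e ⊔ a * (e * e) := by rw [hrd, mul_assoc]
    _ ≤ a * e := sup_le le_rfl (mul_le_mul_left_of_mul_sup hld (he _) a)

theorem top_mul_sup_inf (a : S) : e * (a ⊔ (a * e ⊓ e * a)) = e * a := by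
  refine le_antisymm ?_ (mul_le_mul_left_of_mul_sup hld le_sup_left e)
  calc e * (a ⊔ (a * e ⊓ e * a)) ≤ e * (a ⊔ e * a) :=
        mul_le_mul_left_of_mul_sup hld (sup_le_sup_left inf_le_right a) e
    _ = e * a ⊔ (e * e) * a := by rw [hld, mul_assoc]
    _ ≤ e * a := sup_le le_rfl (mul_le_mul_right_of_sup_mul hrd (he _) a)

end DistribSemigroupLattice

/-- `a ∨ (ae ∧ ea)` is the quasi-ideal element generated by `a`. -/
theorem quasi_ideal_element_generated {S : Type*} [Semigroup S] [Lattice S]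
    (e : S) (he : ∀ a : S, a ≤ e)
    (hld : ∀ a b c : S, a * (b ⊔ c) = a * b ⊔ a * c)
    (hrd : ∀ a b c : S, (a ⊔ b) * c = a * c ⊔ b * c)
    (a : S) (q : S) (hq : q = a ⊔ (a * e ⊓ e * a)) :
    q * e ⊓ e * q ≤ q ∧ a ≤ q ∧
    (∀ t : S, t * e ⊓ e * t ≤ t → a ≤ t → q ≤ t) := by
  subst hq
  refine ⟨?_, le_sup_left, fun t ht hat => sup_le hat ?_⟩
  · rw [sup_inf_mul_top he hld hrd, top_mul_sup_inf he hld hrd]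
    exact le_sup_right
  · exact (inf_le_inf (mul_le_mul_right_of_sup_mul hrd hat e)
      (mul_le_mul_left_of_mul_sup hld hat e)).trans ht
end

section
/- Let S be an intra-regular le-semigroup with greatest element e. Then for every right ideal element x, every left ideal element y, and every bi-ideal element b of S, one has x ∧ b ∧ y ≤ ybx. -/
/-! Intra-regularity applied twice gives `a ≤ e(eaae)(eaae)e = (eea)(aeea)(aee)`. For
`a = x ∧ b ∧ y` the three factors lie below `ey ≤ y`, `beb ≤ b` and `xe ≤ x`. -/

section Monotone

variable {S : Type*} [Mul S] [SemilatticeSup S]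

theorem mulLeftMono_of_mul_sup (h : ∀ a b c : S, a * (b ⊔ c) = a * b ⊔ a * c) :
    MulLeftMono S :=
  ⟨fun a b c hbc => by
    rw [← sup_eq_right.mpr hbc, h]
    exact le_sup_left⟩

theorem mulRightMono_of_sup_mul (h : ∀ a b c : S, (a ⊔ b) * c = a * c ⊔ b * c) :
    MulRightMono S :=
  ⟨fun c a b hab => by
    change a * c ≤ b * c
    rw [← sup_eq_right.mpr hab, h]
    exact le_sup_left⟩

end Monotone

theorem le_mul_mul_of_intraRegular {S : Type*} [Semigroup S] [Preorder S] [MulLeftMono S]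
    [MulRightMono S] {e : S} (hir : ∀ a : S, a ≤ e * (a * a) * e) (a : S) :
    a ≤ e * e * a * (a * (e * e) * a) * (a * (e * e)) :=
  calc a ≤ e * (a * a) * e := hir a
    _ ≤ e * (e * (a * a) * e * (e * (a * a) * e)) * e :=
      mul_le_mul_left (mul_le_mul_right (mul_le_mul' (hir a) (hir a)) e) e
    _ = e * e * a * (a * (e * e) * a) * (a * (e * e)) := by simp only [mul_assoc]

/-- In an intra-regular le-semigroup, `x ∧ b ∧ y ≤ ybx` for every right ideal
element x, left ideal element y and bi-ideal element b. -/
theorem intra_regular_le_bi_ideal_element {S : Type*} [Semigroup S] [Lattice S]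
    (e : S) (he : ∀ a : S, a ≤ e)
    (hld : ∀ a b c : S, a * (b ⊔ c) = a * b ⊔ a * c)
    (hrd : ∀ a b c : S, (a ⊔ b) * c = a * c ⊔ b * c)
    (hir : ∀ a : S, a ≤ e * (a * a) * e)
    (x y b : S) (hx : x * e ≤ x) (hy : e * y ≤ y) (hb : b * e * b ≤ b) :
    x ⊓ b ⊓ y ≤ y * b * x := by
  have := mulLeftMono_of_mul_sup hld
  have := mulRightMono_of_sup_mul hrd
  set a := x ⊓ b ⊓ y
  have hax : a ≤ x := inf_le_left.trans inf_le_left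
  have hab : a ≤ b := inf_le_left.trans inf_le_right
  have hay : a ≤ y := inf_le_right
  have hleft : e * e * a ≤ y := (mul_le_mul' (he _) hay).trans hy
  have hmid : a * (e * e) * a ≤ b := (mul_le_mul' (mul_le_mul' hab (he _)) hab).trans hb
  have hright : a * (e * e) ≤ x := (mul_le_mul' hax (he _)).trans hx
  exact (le_mul_mul_of_intraRegular hir a).trans (mul_le_mul' (mul_le_mul' hleft hmid) hright)
end

section
/- Let S be a poe-semigroup with greatest element e which is intra-regular (a ≤ ea²e for all a ∈ S). Let x be a right ideal element (xe ≤ x), y a left ideal element (ey ≤ y), and b a bi-ideal element (beb ≤ b) of S, and suppose that m ∈ S is a greatest lower bound of the set {x, b, y}. Then m ≤ ybx. -/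
/-! Applying intra-regularity `a ≤ e a² e` to `a` and then to both inner copies of `a` gives
`a ≤ (e e a)(a e e a)(a e e) ≤ (e a)(a e a)(a e)`. For `a` below `x`, `b` and `y`, the three
factors lie below `y`, `b` and `x` because `y`, `b`, `x` are left ideal, bi-ideal and right ideal
elements. -/

section OrderedSemigroup

variable {S : Type*} [Preorder S]

theorem le_mul_mul_mul_of_le_mul_sq_mul_s18 [Semigroup S] [MulLeftMono S] [MulRightMono S] {e a : S}
    (hee : e * e ≤ e) (ha : a ≤ e * (a * a) * e) : a ≤ e * a * (a * e * a) * (a * e) :=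
  calc a ≤ e * ((e * (a * a) * e) * (e * (a * a) * e)) * e := ha.trans (by gcongr)
    _ = e * e * a * (a * (e * e) * a) * (a * (e * e)) := by simp only [mul_assoc]
    _ ≤ e * a * (a * e * a) * (a * e) := by gcongr

theorem mul_le_of_le_of_mul_le_left [Mul S] [MulLeftMono S] {e a y : S} (hay : a ≤ y)
    (hy : e * y ≤ y) : e * a ≤ y :=
  (mul_le_mul_right hay e).trans hy

theorem mul_le_of_le_of_mul_le_right [Mul S] [MulRightMono S] {e a x : S} (hax : a ≤ x)
    (hx : x * e ≤ x) : a * e ≤ x :=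
  (mul_le_mul_left hax e).trans hx

theorem mul_mul_le_of_le_of_mul_mul_le [Mul S] [MulLeftMono S] [MulRightMono S] {e a b : S}
    (hab : a ≤ b) (hb : b * e * b ≤ b) : a * e * a ≤ b :=
  (mul_le_mul' (mul_le_mul_left hab e) hab).trans hb

end OrderedSemigroup

/-- In an intra-regular poe-semigroup, if the greatest lower bound `m` of
`{x, b, y}` exists for a right ideal element x, a left ideal element y and a
bi-ideal element b, then `m ≤ ybx`. -/
theorem poe_intra_regular_glb {S : Type*} [Semigroup S] [PartialOrder S]
    [CovariantClass S S (· * ·) (· ≤ ·)]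
    [CovariantClass S S (Function.swap (· * ·)) (· ≤ ·)]
    (e : S) (he : ∀ a : S, a ≤ e)
    (hir : ∀ a : S, a ≤ e * (a * a) * e)
    (x y b : S) (hx : x * e ≤ x) (hy : e * y ≤ y) (hb : b * e * b ≤ b)
    (m : S) (hm : IsGLB {x, b, y} m) :
    m ≤ y * b * x := by
  have hmx : m ≤ x := hm.1 (by simp)
  have hmb : m ≤ b := hm.1 (by simp)
  have hmy : m ≤ y := hm.1 (by simp)
  calc m ≤ e * m * (m * e * m) * (m * e) := le_mul_mul_mul_of_le_mul_sq_mul_s18 (he _) (hir m)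
    _ ≤ y * b * x := mul_le_mul' (mul_le_mul' (mul_le_of_le_of_mul_le_left hmy hy)
        (mul_mul_le_of_le_of_mul_mul_le hmb hb)) (mul_le_of_le_of_mul_le_right hmx hx)
end
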